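/- arXiv:2407.09580 — 4 statements merged into one kernel-verified Lean document; each statement's English description precedes it below -/
import Mathlib

section
/- Let K be a positive integer and let a_1, …, a_K be rationally independent real numbers. Let g : ℝ → ℝ be a periodic function with period T > 0, and suppose there exist x_1 < x_2 with 0 < x_2 − x_1 < T such that g is continuous on [x_1, x_2] and min_{x ∈ [x_1,x_2]} g(x) < max_{x ∈ [x_1,x_2]} g(x). Then the set { (u·g(w·a_1) + v, u·g(w·a_2) + v, …, u·g(w·a_K) + v) : u, w, v ∈ ℝ } is dense in ℝ^K. -/
open Set

lemma aux_line_mem {F : Type*} [NormedAddCommGroup F] [NormedSpace ℝ F] [FiniteDimensional ℝ F]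
    (D : AddSubgroup F) (hD : IsClosed (D : Set F))
    (h : ∀ ε : ℝ, 0 < ε → ∃ d ∈ D, d ≠ 0 ∧ ‖d‖ < ε) :
    ∃ u : F, ‖u‖ = 1 ∧ ∀ t : ℝ, t • u ∈ D := by
  choose d hdD hd0 hdn using fun n : ℕ => h (1 / (n + 1)) (by positivity)
  have hsph : ∀ n, (‖d n‖⁻¹ • d n) ∈ Metric.sphere (0 : F) 1 := by
    intro n
    simp [norm_smul, abs_of_nonneg, inv_mul_cancel₀ (norm_ne_zero_iff.2 (hd0 n))]
  obtain ⟨u, hu, φ, hφ, hconv⟩ :=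
    (isCompact_sphere (0 : F) 1).tendsto_subseq hsph
  have hu1 : ‖u‖ = 1 := by simpa using hu
  refine ⟨u, hu1, fun t => ?_⟩
  have hdpos : ∀ n, (0:ℝ) < ‖d n‖ := fun n => norm_pos_iff.2 (hd0 n)
  have hdle : ∀ n, ‖d n‖ ≤ 1 / (n + 1) := fun n => (hdn n).le
  set m : ℕ → ℤ := fun n => round (t / ‖d (φ n)‖) with hm
  have hmem : ∀ n, (m n • d (φ n)) ∈ D := fun n => zsmul_mem (hdD _) _
  have hlim : Filter.Tendsto (fun n => m n • d (φ n)) Filter.atTop (nhds (t • u)) := by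
    rw [tendsto_iff_norm_sub_tendsto_zero]
    have hbound : ∀ n, ‖m n • d (φ n) - t • u‖ ≤
        (|t| + 1) * ‖(‖d (φ n)‖⁻¹ • d (φ n)) - u‖ + 1 / (n + 1) := by
      intro n
      set dn := d (φ n) with hdn'
      set un := ‖dn‖⁻¹ • dn with hun
      have hdnp : (0:ℝ) < ‖dn‖ := hdpos _
      have hdn1 : ‖dn‖ ≤ 1 / (n + 1) := by
        calc ‖dn‖ ≤ 1 / (φ n + 1) := hdle _
          _ ≤ 1 / (n + 1) := by
            apply one_div_le_one_div_of_le (by positivity)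
            have h : n ≤ φ n := hφ.le_apply
            have : (n:ℝ) ≤ (φ n : ℝ) := Nat.cast_le.2 h
            linarith
      have hdn2 : ‖dn‖ ≤ 1 := by
        refine hdn1.trans ?_
        rw [div_le_one (by positivity)]
        linarith [Nat.cast_nonneg (α := ℝ) n]
      have h1 : (m n : ℝ) • dn = ((m n : ℝ) * ‖dn‖) • un := by
        rw [smul_smul, mul_assoc, mul_inv_cancel₀ (ne_of_gt hdnp), mul_one]
      have hround : |(m n : ℝ) - t / ‖dn‖| ≤ 1 / 2 := by
        simpa [abs_sub_comm] using abs_sub_round (t / ‖dn‖)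
      have h2 : |(m n : ℝ) * ‖dn‖ - t| ≤ ‖dn‖ / 2 := by
        have he : (m n : ℝ) * ‖dn‖ - t = ((m n : ℝ) - t / ‖dn‖) * ‖dn‖ := by
          field_simp
        rw [he, abs_mul, abs_of_nonneg (norm_nonneg _)]
        calc |(m n : ℝ) - t / ‖dn‖| * ‖dn‖ ≤ (1/2) * ‖dn‖ :=
              mul_le_mul_of_nonneg_right hround (norm_nonneg _)
          _ = ‖dn‖ / 2 := by ring
      have h3 : |(m n : ℝ) * ‖dn‖| ≤ |t| + 1 := by
        have := abs_add_le t ((m n : ℝ) * ‖dn‖ - t)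
        have : |(m n : ℝ) * ‖dn‖| ≤ |t| + |(m n : ℝ) * ‖dn‖ - t| := by
          simpa [abs_sub_comm] using this
        nlinarith
      calc ‖m n • dn - t • u‖
          = ‖((m n : ℝ) * ‖dn‖) • (un - u) + (((m n : ℝ) * ‖dn‖ - t)) • u‖ := by
            rw [show (m n • dn : F) = (m n : ℝ) • dn from (Int.cast_smul_eq_zsmul ℝ _ _).symm, h1]
            congr 1
            rw [smul_sub, sub_smul]
            abel
        _ ≤ ‖((m n : ℝ) * ‖dn‖) • (un - u)‖ + ‖(((m n : ℝ) * ‖dn‖ - t)) • u‖ := norm_add_le _ _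
        _ = |(m n : ℝ) * ‖dn‖| * ‖un - u‖ + |(m n : ℝ) * ‖dn‖ - t| := by
            rw [norm_smul, norm_smul, Real.norm_eq_abs, Real.norm_eq_abs, hu1, mul_one]
        _ ≤ (|t| + 1) * ‖un - u‖ + 1 / (n + 1) := by
            have hnn : (0:ℝ) ≤ ‖un - u‖ := norm_nonneg _
            nlinarith
    have hB : Filter.Tendsto
        (fun n => (|t| + 1) * ‖(‖d (φ n)‖⁻¹ • d (φ n)) - u‖ + 1 / ((n : ℝ) + 1))
        Filter.atTop (nhds 0) := by
      have h1 : Filter.Tendsto (fun n => ‖(‖d (φ n)‖⁻¹ • d (φ n)) - u‖) Filter.atTop (nhds 0) :=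
        tendsto_iff_norm_sub_tendsto_zero.1 hconv
      have h2 := h1.const_mul (|t| + 1)
      have h3 : Filter.Tendsto (fun n : ℕ => 1 / ((n : ℝ) + 1)) Filter.atTop (nhds 0) :=
        tendsto_one_div_add_atTop_nhds_zero_nat
      simpa using h2.add h3
    exact squeeze_zero (fun n => norm_nonneg _) hbound hB
  exact hD.mem_of_tendsto hlim (Filter.Eventually.of_forall hmem)

open Set

/-- The subgroup `{ w • a + T • z }`. -/
def lineLattice {K : ℕ} (a : Fin K → ℝ) (T : ℝ) : AddSubgroup (Fin K → ℝ) where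
  carrier := {x | ∃ (w : ℝ) (z : Fin K → ℤ), x = fun k => w * a k + T * (z k : ℝ)}
  add_mem' := by
    rintro x y ⟨w, z, rfl⟩ ⟨w', z', rfl⟩
    exact ⟨w + w', z + z', by funext k; simp only [Pi.add_apply]; push_cast; ring⟩
  zero_mem' := ⟨0, 0, by funext k; simp⟩
  neg_mem' := by
    rintro x ⟨w, z, rfl⟩
    exact ⟨-w, -z, by funext k; simp only [Pi.neg_apply]; push_cast; ring⟩

set_option maxHeartbeats 1000000 in
set_option synthInstance.maxHeartbeats 400000 in
lemma dense_lineLattice {K : ℕ} (a : Fin K → ℝ)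
    (hindep : ∀ lam : Fin K → ℚ, (∑ k, (lam k : ℝ) * a k) = 0 → ∀ k, lam k = 0)
    (T : ℝ) (hT : 0 < T) :
    Dense (lineLattice a T : Set (Fin K → ℝ)) := by
  classical
  let e : Fin K → Fin K → ℝ := fun k => Pi.single k (1:ℝ)
  have he1 : ∀ k, e k k = 1 := fun k => by simp [e]
  have he2 : ∀ k j, j ≠ k → e k j = 0 := fun k j h => by simp [e, Pi.single_eq_of_ne h]
  set S := lineLattice a T with hS
  set H := S.topologicalClosure with hH
  have hHclosed : IsClosed (H : Set (Fin K → ℝ)) := S.isClosed_topologicalClosure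
  -- the subspace of directions fully contained in H
  set V : Submodule ℝ (Fin K → ℝ) :=
    { carrier := {x | ∀ t : ℝ, t • x ∈ H}
      add_mem' := fun hx hy t => by
        rw [smul_add]; exact H.add_mem (hx t) (hy t)
      zero_mem' := fun t => by rw [smul_zero]; exact H.zero_mem
      smul_mem' := fun c x hx t => by
        rw [smul_smul]; exact hx (t * c) } with hV
  have hVH : (V : Set (Fin K → ℝ)) ⊆ (H : Set (Fin K → ℝ)) := fun x hx => by simpa using hx 1
  have hVmem : ∀ x : (Fin K → ℝ), x ∈ V ↔ ∀ t : ℝ, t • x ∈ H := fun x => Iff.rfl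
  have haS : ∀ t : ℝ, t • a ∈ S := fun t => ⟨t, 0, by funext k; simp [Pi.smul_apply, mul_comm]⟩
  have haV : a ∈ V := fun t => S.le_topologicalClosure (haS t)
  have heS : ∀ k : Fin K, (T • e k : (Fin K → ℝ)) ∈ S := by
    intro k
    refine ⟨0, Pi.single k 1, ?_⟩
    funext j
    have hz : ((Pi.single k (1:ℤ) : Fin K → ℤ) j : ℝ) = e k j := by
      rcases eq_or_ne j k with rfl | hjk
      · rw [he1]; simp
      · rw [he2 k j hjk, Pi.single_eq_of_ne hjk]; simp
    rw [Pi.smul_apply, smul_eq_mul, ← hz]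
    ring
  suffices hVtop : V = ⊤ by
    intro x
    have hxH : x ∈ H := hVH (by rw [hVtop]; trivial)
    exact hxH
  -- complement
  obtain ⟨W, hcompl⟩ := Submodule.exists_isCompl V
  set π : (Fin K → ℝ) →ₗ[ℝ] W := Submodule.linearProjOfIsCompl W V hcompl.symm with hπ
  have hπW : ∀ w : W, π (w : (Fin K → ℝ)) = w := Submodule.linearProjOfIsCompl_apply_left hcompl.symm
  have hπV : ∀ x ∈ V, π x = 0 := fun x hx =>
    Submodule.projectionOnto_apply_of_mem_right hcompl.symm hx
  have hsub : ∀ x : (Fin K → ℝ), x - (π x : (Fin K → ℝ)) ∈ V := by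
    intro x
    have := Submodule.projectionOnto_apply_eq_zero_iff hcompl.symm (x := x - (π x : (Fin K → ℝ)))
    rw [← this]
    show π (x - (π x : (Fin K → ℝ))) = 0
    rw [map_sub, hπW, sub_self]
  -- D = H ∩ W as a subgroup of W
  set D : AddSubgroup W := H.comap W.subtype.toAddMonoidHom with hD
  have hDmem : ∀ w : W, w ∈ D ↔ (w : (Fin K → ℝ)) ∈ H := fun w => Iff.rfl
  have hπH : ∀ x : (Fin K → ℝ), x ∈ H → π x ∈ D := by
    intro x hx
    rw [hDmem]
    have : (π x : (Fin K → ℝ)) = x - (x - (π x : (Fin K → ℝ))) := by abel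
    rw [this]
    exact H.sub_mem hx (hVH (hsub x))
  have hDclosed : IsClosed (D : Set W) := hHclosed.preimage continuous_subtype_val
  -- discreteness of D
  have hdisc : ∃ ε : ℝ, 0 < ε ∧ ∀ d ∈ D, ‖d‖ < ε → d = 0 := by
    by_contra hc
    push_neg at hc
    have : ∀ ε : ℝ, 0 < ε → ∃ d ∈ D, d ≠ 0 ∧ ‖d‖ < ε := by
      intro ε hε
      obtain ⟨d, hd, hdn, hd0⟩ := hc ε hε
      exact ⟨d, hd, hd0, hdn⟩
    obtain ⟨u, hu1, hu⟩ := aux_line_mem D hDclosed this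
    have huV : (u : (Fin K → ℝ)) ∈ V := by
      intro t
      have := hu t
      rw [hDmem] at this
      simpa using this
    have : (u : (Fin K → ℝ)) = 0 := by
      have h0 : (u : (Fin K → ℝ)) ∈ V ⊓ W := ⟨huV, u.2⟩
      rw [hcompl.inf_eq_bot] at h0
      simpa using h0
    have : u = 0 := Subtype.ext this
    rw [this] at hu1
    simp at hu1
  obtain ⟨ε, hε, hεD⟩ := hdisc
  -- D as a ℤ-submodule, discrete & spanning, hence a lattice
  set L : Submodule ℤ W := AddSubgroup.toIntSubmodule D with hL
  have hLmem : ∀ w : W, w ∈ L ↔ w ∈ D := fun w => Iff.rfl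
  haveI : DiscreteTopology L := by
    rw [discreteTopology_iff_isOpen_singleton_zero]
    rw [Metric.isOpen_singleton_iff]
    refine ⟨ε, hε, fun y hy => ?_⟩
    have : dist (y : W) ((0 : L) : W) < ε := hy
    rw [Subtype.ext_iff]
    refine hεD _ y.2 ?_
    simpa [dist_eq_norm] using this
  -- the lattice points coming from the standard lattice
  have hLk : ∀ k : Fin K, π (T • e k) ∈ L := by
    intro k
    exact hπH _ (S.le_topologicalClosure (heS k))
  -- π is surjective and its image is spanned by the π(T e_k)
  have hx_expand : ∀ x : (Fin K → ℝ), π x = ∑ k, x k • π (e k) := by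
    intro x
    have hxe : x = ∑ k, x k • e k := by
      funext j
      rw [Finset.sum_apply]
      rw [Finset.sum_eq_single j (fun k _ hk => by
        rw [Pi.smul_apply, he2 k j (Ne.symm hk), smul_zero]) (by simp)]
      rw [Pi.smul_apply, he1, smul_eq_mul, mul_one]
    conv_lhs => rw [hxe]
    rw [map_sum]
    congr 1
    funext k
    rw [map_smul]
  haveI : IsZLattice ℝ L := by
    constructor
    rw [eq_top_iff]
    rintro w -
    have : (w : W) = π (w : (Fin K → ℝ)) := (hπW w).symm
    rw [this, hx_expand]
    refine Submodule.sum_mem _ fun k _ => ?_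
    have h1 : π (e k) = T⁻¹ • π (T • e k) := by
      rw [map_smul, smul_smul, inv_mul_cancel₀ (ne_of_gt hT), one_smul]
    rw [h1, smul_smul]
    exact Submodule.smul_mem _ _ (Submodule.subset_span (hLk k))
  haveI : Module.Free ℤ L := ZLattice.module_free ℝ L
  haveI : Module.Finite ℤ L := ZLattice.module_finite ℝ L
  set ι := Module.Free.ChooseBasisIndex ℤ L with hι
  set b : Module.Basis ι ℤ L := Module.Free.chooseBasis ℤ L with hb
  set bW : Module.Basis ι ℝ W := b.ofZLatticeBasis ℝ L with hbW
  set ℓ : Fin K → L := fun k => ⟨π (T • e k), hLk k⟩ with hℓ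
  -- the integer coordinates all vanish, by rational independence
  have hM : ∀ j : ι, ∀ k : Fin K, b.repr (ℓ k) j = 0 := by
    intro j
    have hπa : π a = 0 := hπV a haV
    have hsum : ∑ k, a k • ((ℓ k : W)) = 0 := by
      have h1 : π (T • a) = ∑ k, (T * a k) • π (e k) := by
        rw [hx_expand (T • a)]
        congr 1
      have h2 : π (T • a) = 0 := by rw [map_smul, hπa, smul_zero]
      have h3 : ∀ k : Fin K, (ℓ k : W) = T • π (e k) := by
        intro k; rw [hℓ]; simp [map_smul]
      calc ∑ k, a k • ((ℓ k : W)) = ∑ k, (T * a k) • π (e k) := by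
            congr 1; funext k; rw [h3, smul_smul, mul_comm (a k) T]
        _ = 0 := by rw [← h1, h2]
    have hco : ∀ k, bW.coord j ((ℓ k : W)) = ((b.repr (ℓ k) j : ℤ) : ℝ) := by
      intro k
      rw [Module.Basis.coord_apply]
      exact_mod_cast b.ofZLatticeBasis_repr_apply ℝ L (ℓ k) j
    have hrepr : ∑ k, a k * ((b.repr (ℓ k) j : ℤ) : ℝ) = 0 := by
      have h4 := congrArg (bW.coord j) hsum
      rw [map_sum, map_zero] at h4
      rw [← h4]
      congr 1
      funext k
      rw [map_smul, smul_eq_mul, hco k]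
    intro k
    have := hindep (fun k => ((b.repr (ℓ k) j : ℤ) : ℚ)) (by
      push_cast
      rw [← hrepr]
      congr 1; funext k; ring) k
    exact_mod_cast this
  have hℓ0 : ∀ k, (ℓ k : W) = 0 := by
    intro k
    have : b.repr (ℓ k) = 0 := by
      ext j; simpa using hM j k
    have h0 : ℓ k = 0 := by
      rw [Module.Basis.ext_elem_iff b]
      intro i
      rw [this]
      simp
    rw [h0]
    rfl
  have hπek : ∀ k : Fin K, π (e k) = 0 := by
    intro k
    have h1 : π (T • e k) = 0 := hℓ0 k
    have := congrArg (fun w : W => (T⁻¹ : ℝ) • w) h1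
    simpa [map_smul, smul_smul, inv_mul_cancel₀ (ne_of_gt hT)] using this
  have hWbot : W = ⊥ := by
    rw [eq_bot_iff]
    rintro w hw
    have h5 : π w = (⟨w, hw⟩ : W) := hπW ⟨w, hw⟩
    rw [hx_expand] at h5
    simp only [hπek, smul_zero, Finset.sum_const_zero] at h5
    have : w = ((0 : W) : Fin K → ℝ) := congrArg Subtype.val h5.symm
    simpa using this
  rw [hWbot] at hcompl
  simpa using hcompl.sup_eq_top

/-- **Density of the image of rationally independent points under a scaled periodic function.**
If `a 0, …, a (K-1)` are rationally independent reals, `g` is `T`-periodic (`T > 0`),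
continuous on `[x₁, x₂]` with `0 < x₂ - x₁ < T` and non-constant there (its infimum on
`[x₁, x₂]` is strictly less than its supremum), then
`{ (u·g(w·a₁) + v, …, u·g(w·a_K) + v) : u, w, v ∈ ℝ }` is dense in `ℝ^K`. -/
theorem dense_scaled_periodic_of_rationally_independent
    (K : ℕ) (hK : 0 < K) (a : Fin K → ℝ)
    (hindep : ∀ lam : Fin K → ℚ, (∑ k, (lam k : ℝ) * a k) = 0 → ∀ k, lam k = 0)
    (g : ℝ → ℝ) (T : ℝ) (hT : 0 < T) (hper : ∀ x : ℝ, g (x + T) = g x)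
    (x₁ x₂ : ℝ) (hx : 0 < x₂ - x₁) (hxT : x₂ - x₁ < T)
    (hcont : ContinuousOn g (Icc x₁ x₂))
    (hminmax : sInf (g '' Icc x₁ x₂) < sSup (g '' Icc x₁ x₂)) :
    Dense {p : Fin K → ℝ | ∃ u w v : ℝ, ∀ k, p k = u * g (w * a k) + v} := by
  classical
  have hperiodic : Function.Periodic g T := hper
  have hx12 : x₁ < x₂ := by linarith
  set m := sInf (g '' Icc x₁ x₂) with hm
  set M := sSup (g '' Icc x₁ x₂) with hM
  have hne : (Icc x₁ x₂).Nonempty := ⟨x₁, le_refl _, hx12.le⟩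
  have himne : (g '' Icc x₁ x₂).Nonempty := hne.image g
  have hKc : IsCompact (g '' Icc x₁ x₂) := isCompact_Icc.image_of_continuousOn hcont
  obtain ⟨pmin, hpmin, hgmin⟩ := hKc.sInf_mem himne
  obtain ⟨pmax, hpmax, hgmax⟩ := hKc.sSup_mem himne
  have hattain : ∀ c ∈ Ioo m M, ∃ t ∈ Ioo x₁ x₂, g t = c := by
    intro c hc
    have hsub : uIcc pmin pmax ⊆ Icc x₁ x₂ := uIcc_subset_Icc hpmin hpmax
    have hIVT := intermediate_value_uIcc (hcont.mono hsub)
    have hcmem : c ∈ uIcc (g pmin) (g pmax) := by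
      rw [hgmin, hgmax]
      exact Icc_subset_uIcc ⟨hc.1.le, hc.2.le⟩
    obtain ⟨t, htmem, htc⟩ := hIVT hcmem
    have htp1 : t ≠ pmin := by
      intro h
      rw [h, hgmin] at htc
      exact absurd htc.symm (ne_of_gt hc.1)
    have htp2 : t ≠ pmax := by
      intro h
      rw [h, hgmax] at htc
      exact absurd htc.symm (ne_of_lt hc.2)
    refine ⟨t, ?_, htc⟩
    rcases le_total pmin pmax with hle | hle
    · rw [uIcc_of_le hle] at htmem
      exact ⟨lt_of_le_of_lt hpmin.1 (lt_of_le_of_ne htmem.1 (Ne.symm htp1)),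
        lt_of_lt_of_le (lt_of_le_of_ne htmem.2 htp2) hpmax.2⟩
    · rw [uIcc_of_ge hle] at htmem
      exact ⟨lt_of_le_of_lt hpmax.1 (lt_of_le_of_ne htmem.1 (Ne.symm htp2)),
        lt_of_lt_of_le (lt_of_le_of_ne htmem.2 htp1) hpmin.2⟩
  rw [Metric.dense_iff]
  intro p ε hε
  have hmM : m < M := hminmax
  set r := (M - m) / 2 with hr
  have hrpos : 0 < r := by rw [hr]; linarith
  set mid := (m + M) / 2 with hmid
  set Sp := ∑ k, |p k| with hSp
  have hSpnn : 0 ≤ Sp := Finset.sum_nonneg fun k _ => abs_nonneg _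
  set u := (2 / r) * (1 + Sp) with hu
  have hupos : 0 < u := by positivity
  have hpk : ∀ k, |p k / u| < r / 2 := by
    intro k
    rw [abs_div, abs_of_pos hupos, div_lt_iff₀ hupos]
    have h1 : |p k| ≤ Sp := by
      rw [hSp]
      exact Finset.single_le_sum (f := fun j => |p j|) (fun j _ => abs_nonneg _)
        (Finset.mem_univ k)
    have h2 : r / 2 * u = 1 + Sp := by
      rw [hu]
      field_simp
    rw [h2]
    linarith
  set c : Fin K → ℝ := fun k => p k / u + mid with hc
  have hcmem : ∀ k, c k ∈ Ioo m M := by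
    intro k
    have h1 := abs_lt.1 (hpk k)
    constructor
    · have : mid - r = m := by rw [hmid, hr]; ring
      simp only [hc]
      linarith
    · have : mid + r = M := by rw [hmid, hr]; ring
      simp only [hc]
      linarith
  choose t ht hgt using fun k => hattain (c k) (hcmem k)
  have hcontat : ∀ k, ContinuousAt g (t k) := fun k =>
    hcont.continuousAt (Icc_mem_nhds (ht k).1 (ht k).2)
  have hδ : ∀ k, ∃ δ : ℝ, 0 < δ ∧ ∀ s, |s - t k| < δ → |g s - g (t k)| < ε / (2 * u) := by
    intro k
    obtain ⟨δ, hδpos, hδ'⟩ := Metric.continuousAt_iff.1 (hcontat k) (ε / (2 * u)) (by positivity)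
    refine ⟨δ, hδpos, fun s hs => ?_⟩
    have := hδ' (show dist s (t k) < δ by rwa [Real.dist_eq])
    rwa [Real.dist_eq] at this
  choose δ hδpos hδprop using hδ
  have hKne : (Finset.univ : Finset (Fin K)).Nonempty := by
    rw [Finset.univ_nonempty_iff]
    exact Fin.pos_iff_nonempty.1 hK
  set δ0 := Finset.univ.inf' hKne δ with hδ0
  have hδ0pos : 0 < δ0 := by
    rw [hδ0, Finset.lt_inf'_iff]
    exact fun k _ => hδpos k
  obtain ⟨q, hqball, hqS⟩ := Metric.dense_iff.1 (dense_lineLattice a hindep T hT) t δ0 hδ0pos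
  obtain ⟨w, z, rfl⟩ := hqS
  set v := -(u * mid) with hv
  refine ⟨fun k => u * g (w * a k) + v, ?_, u, w, v, fun k => rfl⟩
  rw [Metric.mem_ball]
  rw [dist_pi_lt_iff hε]
  intro k
  have hqk : |w * a k + T * (z k : ℝ) - t k| < δ k := by
    have h3 : δ0 ≤ δ k := Finset.inf'_le δ (Finset.mem_univ k)
    have h4 := (dist_pi_lt_iff hδ0pos).1 (Metric.mem_ball.1 hqball) k
    rw [Real.dist_eq] at h4
    exact lt_of_lt_of_le h4 h3
  have hgper : g (w * a k) = g (w * a k + T * (z k : ℝ)) := by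
    have := hperiodic.sub_int_mul_eq (x := w * a k + T * (z k : ℝ)) (n := z k)
    rw [show w * a k + T * (z k : ℝ) - (z k : ℝ) * T = w * a k by ring] at this
    exact this
  have hgc : |g (w * a k + T * (z k : ℝ)) - c k| < ε / (2 * u) := by
    rw [← hgt k]
    exact hδprop k _ hqk
  have hfinal : u * g (w * a k) + v - p k = u * (g (w * a k + T * (z k : ℝ)) - c k) := by
    rw [← hgper, hv, hc]
    field_simp
    ring
  rw [Real.dist_eq, hfinal, abs_mul, abs_of_pos hupos]
  calc u * |g (w * a k + T * (z k : ℝ)) - c k| < u * (ε / (2 * u)) := by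
        exact mul_lt_mul_of_pos_left hgc hupos
    _ = ε / 2 := by field_simp
    _ < ε := by linarith
end

section
/- Let K be a positive integer and let ρ : ℝ → ℝ be real analytic and non-polynomial on an open interval (α, β) with α < β. Then there exists w_0 ∈ (−(β−α)/(2K), (β−α)/(2K)) such that the K real numbers ρ((α+β)/2 + k·w_0), for k = 1, 2, …, K, are rationally independent. -/
open Set Filter Topology


lemma vdm_aux {K : ℕ} (lam : Fin K → ℚ) (j : Fin K) (hj : lam j ≠ 0)
    (hmax : ∀ k, lam k ≠ 0 → k ≤ j) :
    ∃ N : ℕ, ∀ n ≥ N, (∑ k, (lam k : ℝ) * (((k : ℕ) : ℝ) + 1) ^ n) ≠ 0 := by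
  have hjR : ((lam j : ℝ)) ≠ 0 := by exact_mod_cast hj
  rcases Nat.eq_zero_or_pos (j : ℕ) with hj0 | hj1
  · refine ⟨0, fun n _ h => ?_⟩
    have hs : (∑ k, (lam k : ℝ) * (((k : ℕ) : ℝ) + 1) ^ n)
        = (lam j : ℝ) * (((j : ℕ) : ℝ) + 1) ^ n := by
      refine Finset.sum_eq_single j (fun k _ hk => ?_) (fun h => absurd (Finset.mem_univ j) h)
      by_cases h' : lam k = 0
      · simp [h']
      · exact absurd (le_antisymm (hmax k h') (by
          rw [Fin.le_def]; omega)) hk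
    rw [hs, hj0] at h
    simp at h
    exact hj (by exact_mod_cast h)
  · set b : ℝ := ((j : ℕ) : ℝ) + 1 with hbdef
    set C : ℝ := ∑ k, |(lam k : ℝ)| with hCdef
    have hjpos : (0:ℝ) < ((j : ℕ) : ℝ) := by exact_mod_cast hj1
    have hbpos : (0:ℝ) < b := by positivity
    have hjb : ((j : ℕ) : ℝ) < b := by simp [hbdef]
    have hrlt : ((j : ℕ) : ℝ) / b < 1 := (div_lt_one hbpos).mpr hjb
    have hrnn : (0:ℝ) ≤ ((j : ℕ) : ℝ) / b := by positivity
    have htend : Tendsto (fun n : ℕ => C * (((j : ℕ) : ℝ) / b) ^ n) atTop (𝓝 0) := by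
      simpa using (tendsto_pow_atTop_nhds_zero_of_lt_one hrnn hrlt).const_mul C
    have hev : ∀ᶠ n : ℕ in atTop, C * (((j : ℕ) : ℝ) / b) ^ n < |(lam j : ℝ)| :=
      htend.eventually_lt_const (abs_pos.mpr hjR)
    obtain ⟨N, hN⟩ := eventually_atTop.mp hev
    refine ⟨N, fun n hn h0 => ?_⟩
    have hbn : (0:ℝ) < b ^ n := by positivity
    have hsplit : (lam j : ℝ) * b ^ n
        = -∑ k ∈ Finset.univ.erase j, (lam k : ℝ) * (((k : ℕ) : ℝ) + 1) ^ n := by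
      have h := Finset.add_sum_erase Finset.univ
        (fun k => (lam k : ℝ) * (((k : ℕ) : ℝ) + 1) ^ n) (Finset.mem_univ j)
      rw [h0] at h
      have := eq_neg_of_add_eq_zero_left h
      simpa [hbdef] using this
    have hT : |∑ k ∈ Finset.univ.erase j, (lam k : ℝ) * (((k : ℕ) : ℝ) + 1) ^ n|
        ≤ C * ((j : ℕ) : ℝ) ^ n := by
      calc |∑ k ∈ Finset.univ.erase j, (lam k : ℝ) * (((k : ℕ) : ℝ) + 1) ^ n|
          ≤ ∑ k ∈ Finset.univ.erase j, |(lam k : ℝ) * (((k : ℕ) : ℝ) + 1) ^ n| :=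
            Finset.abs_sum_le_sum_abs _ _
        _ ≤ ∑ k ∈ Finset.univ.erase j, |(lam k : ℝ)| * ((j : ℕ) : ℝ) ^ n := by
            refine Finset.sum_le_sum fun k hk => ?_
            by_cases h' : lam k = 0
            · simp [h']
            · have hk1 : (k : ℕ) + 1 ≤ (j : ℕ) := by
                have := hmax k h'
                have hne := Finset.ne_of_mem_erase hk
                rw [Fin.le_def] at this
                rcases lt_or_eq_of_le this with h | h
                · omega
                · exact absurd (Fin.ext h) hne
              have hb1 : (((k : ℕ) : ℝ) + 1) ≤ ((j : ℕ) : ℝ) := by exact_mod_cast hk1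
              rw [abs_mul]
              refine mul_le_mul_of_nonneg_left ?_ (abs_nonneg _)
              rw [abs_of_nonneg (by positivity)]
              exact pow_le_pow_left₀ (by positivity) hb1 n
        _ ≤ C * ((j : ℕ) : ℝ) ^ n := by
            rw [← Finset.sum_mul]
            refine mul_le_mul_of_nonneg_right ?_ (by positivity)
            exact Finset.sum_le_sum_of_subset_of_nonneg (Finset.erase_subset _ _)
              (fun _ _ _ => abs_nonneg _)
    have hkey : C * ((j : ℕ) : ℝ) ^ n < |(lam j : ℝ)| * b ^ n := by
      have h1 := hN n hn
      have h2 : C * ((j : ℕ) : ℝ) ^ n = C * (((j : ℕ) : ℝ) / b) ^ n * b ^ n := by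
        rw [div_pow]; field_simp
      rw [h2]
      exact mul_lt_mul_of_pos_right h1 hbn
    have hcontra : |(lam j : ℝ)| * b ^ n ≤ C * ((j : ℕ) : ℝ) ^ n := by
      have : |(lam j : ℝ)| * b ^ n = |(lam j : ℝ) * b ^ n| := by
        rw [abs_mul, abs_of_pos hbn]
      rw [this, hsplit, abs_neg]
      exact hT
    linarith


/-- **Existence of a frequency producing rationally independent values.**
If `ρ` is real analytic and non-polynomial on `(α, β)` with `α < β`, then there exists
`w₀ ∈ (-(β-α)/(2K), (β-α)/(2K))` such that the `K` numbers `ρ((α+β)/2 + k·w₀)`,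
`k = 1, …, K`, are rationally independent. -/
theorem exists_w0_rationally_independent
    (K : ℕ) (hK : 0 < K) (ρ : ℝ → ℝ) (α β : ℝ) (hαβ : α < β)
    (hanal : AnalyticOnNhd ℝ ρ (Ioo α β))
    (hnonpoly : ¬ ∃ p : Polynomial ℝ, ∀ x ∈ Ioo α β, ρ x = p.eval x) :
    ∃ w₀ ∈ Ioo (-((β - α) / (2 * K))) ((β - α) / (2 * K)),
      ∀ lam : Fin K → ℚ,
        (∑ k, (lam k : ℝ) * ρ ((α + β) / 2 + ((k : ℕ) + 1) * w₀)) = 0 →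
        ∀ k, lam k = 0 := by
  set m : ℝ := (α + β) / 2 with hm
  set δ : ℝ := (β - α) / (2 * K) with hδ
  have hKR : (0:ℝ) < K := by exact_mod_cast hK
  have hδpos : 0 < δ := by
    rw [hδ]; exact div_pos (by linarith) (by positivity)
  have hmmem : m ∈ Ioo α β := by
    constructor <;> (rw [hm]; linarith)
  have hmem : ∀ (k : Fin K) (w : ℝ), w ∈ Ioo (-δ) δ →
      m + (((k : ℕ) : ℝ) + 1) * w ∈ Ioo α β := by
    intro k w hw
    have hc1 : (1:ℝ) ≤ ((k : ℕ) : ℝ) + 1 := by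
      have : (0:ℝ) ≤ ((k : ℕ) : ℝ) := Nat.cast_nonneg _
      linarith
    have hcK : ((k : ℕ) : ℝ) + 1 ≤ K := by
      have := k.isLt; exact_mod_cast Nat.succ_le_of_lt this
    have habs : |w| < δ := abs_lt.mpr ⟨hw.1, hw.2⟩
    have h1 : |(((k : ℕ) : ℝ) + 1) * w| < (β - α) / 2 := by
      rw [abs_mul, abs_of_nonneg (by positivity : (0:ℝ) ≤ ((k : ℕ) : ℝ) + 1)]
      have h2 : (((k : ℕ) : ℝ) + 1) * |w| < (((k : ℕ) : ℝ) + 1) * δ := by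
        exact mul_lt_mul_of_pos_left habs (by positivity)
      have h3 : (((k : ℕ) : ℝ) + 1) * δ ≤ (K:ℝ) * δ :=
        mul_le_mul_of_nonneg_right hcK hδpos.le
      have h4 : (K:ℝ) * δ = (β - α) / 2 := by
        rw [hδ]; field_simp
      linarith
    have := abs_lt.mp h1
    constructor <;> (rw [hm]; cases' this with h5 h6; linarith)
  -- F lam is analytic on Ioo (-δ) δ
  set F : (Fin K → ℚ) → ℝ → ℝ :=
    fun lam w => ∑ k, (lam k : ℝ) * ρ (m + (((k : ℕ) : ℝ) + 1) * w) with hF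
  have hFanal : ∀ lam : Fin K → ℚ, AnalyticOnNhd ℝ (F lam) (Ioo (-δ) δ) := by
    intro lam w hw
    apply Finset.analyticAt_fun_sum
    intro k _
    apply AnalyticAt.mul analyticAt_const
    have hin : AnalyticAt ℝ (fun w : ℝ => m + (((k : ℕ) : ℝ) + 1) * w) w :=
      analyticAt_const.add (analyticAt_const.mul analyticAt_id)
    exact AnalyticAt.comp (f := fun w : ℝ => m + (((k : ℕ) : ℝ) + 1) * w) (g := ρ)
      (hanal _ (hmem k w hw)) hin
  -- core: F lam cannot vanish identically on Ioo (-δ) δ for lam ≠ 0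
  have hne : ∀ lam : Fin K → ℚ, lam ≠ 0 → ¬ Set.EqOn (F lam) 0 (Ioo (-δ) δ) := by
    intro lam hlam hEq
    -- maximal index with nonzero coefficient
    obtain ⟨k₀, hk₀x⟩ := Function.ne_iff.mp hlam
    have hk₀ : lam k₀ ≠ 0 := hk₀x
    set s : Finset (Fin K) := Finset.univ.filter (fun k => lam k ≠ 0) with hs
    have hsne : s.Nonempty := ⟨k₀, by simp [hs, hk₀]⟩
    set j : Fin K := s.max' hsne with hj
    have hjne : lam j ≠ 0 := by
      have := s.max'_mem hsne
      simp [hs] at this; exact this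
    have hjmax : ∀ k, lam k ≠ 0 → k ≤ j := fun k hk =>
      s.le_max' k (by simp [hs, hk])
    obtain ⟨N, hSN⟩ := vdm_aux lam j hjne hjmax
    -- power series of ρ at m
    obtain ⟨p, hp⟩ := hanal m hmmem
    have hps := hasFPowerSeriesAt_iff.mp hp
    have h0mem : (0:ℝ) ∈ Ioo (-δ) δ := ⟨by linarith, hδpos⟩
    have hF0 : F lam =ᶠ[𝓝 (0:ℝ)] 0 :=
      eventually_of_mem (isOpen_Ioo.mem_nhds h0mem) (fun w hw => hEq hw)
    have hk : ∀ k : Fin K, ∀ᶠ w in 𝓝 (0:ℝ),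
        HasSum (fun n => ((((k : ℕ) : ℝ) + 1) * w) ^ n • p.coeff n)
          (ρ (m + (((k : ℕ) : ℝ) + 1) * w)) := by
      intro k
      have tend : Tendsto (fun w : ℝ => (((k : ℕ) : ℝ) + 1) * w) (𝓝 0) (𝓝 0) := by
        have h := (continuous_const.mul continuous_id :
          Continuous fun w : ℝ => (((k : ℕ) : ℝ) + 1) * w).tendsto 0
        convert h using 2 <;> simp
      exact tend.eventually hps
    set S : ℕ → ℝ := fun n => ∑ k, (lam k : ℝ) * (((k : ℕ) : ℝ) + 1) ^ n with hSdef
    set q : FormalMultilinearSeries ℝ ℝ ℝ := fun n => S n • p n with hq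
    have hqc : ∀ n, q.coeff n = S n * p.coeff n := by
      intro n
      show (S n • p n) 1 = S n * p n 1
      rw [ContinuousMultilinearMap.smul_apply, smul_eq_mul]
    have hq0 : HasFPowerSeriesAt (0 : ℝ → ℝ) q 0 := by
      rw [hasFPowerSeriesAt_iff]
      filter_upwards [eventually_all.mpr hk, hF0] with w hw hFw
      have hsum : HasSum
          (fun n => ∑ k, (lam k : ℝ) * (((((k : ℕ) : ℝ) + 1) * w) ^ n • p.coeff n))
          (∑ k, (lam k : ℝ) * ρ (m + (((k : ℕ) : ℝ) + 1) * w)) :=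
        hasSum_sum (fun k _ => (hw k).mul_left _)
      have heq : ∀ n, (∑ k, (lam k : ℝ) * (((((k : ℕ) : ℝ) + 1) * w) ^ n • p.coeff n))
          = w ^ n • q.coeff n := by
        intro n
        rw [hqc n, hSdef]
        simp only [smul_eq_mul, mul_pow, Finset.sum_mul]
        rw [Finset.mul_sum]
        exact Finset.sum_congr rfl (fun k _ => by ring)
      have hFw' : (∑ k, (lam k : ℝ) * ρ (m + (((k : ℕ) : ℝ) + 1) * w)) = 0 := hFw
      rw [funext heq, hFw'] at hsum
      simpa using hsum
    have hqzero : q = 0 := hq0.eq_zero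
    have hcoeff : ∀ n, S n * p.coeff n = 0 := by
      intro n
      rw [← hqc n]
      show q n 1 = 0
      rw [congrFun hqzero n]
      rfl
    have hpc : ∀ n, N ≤ n → p.coeff n = 0 := by
      intro n hn
      rcases mul_eq_zero.mp (hcoeff n) with h | h
      · exact absurd h (hSN n hn)
      · exact h
    -- ρ agrees with a polynomial near m
    have hps' := hasFPowerSeriesAt_iff'.mp hp
    have hpoly : ρ =ᶠ[𝓝 m] fun z => ∑ n ∈ Finset.range N, (z - m) ^ n * p.coeff n := by
      filter_upwards [hps'] with z hz
      have h2 : HasSum (fun n => (z - m) ^ n • p.coeff n)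
          (∑ n ∈ Finset.range N, (z - m) ^ n • p.coeff n) :=
        hasSum_sum_of_ne_finset_zero (fun n hn => by
          rw [hpc n (by simpa using hn)]; simp)
      have := hz.unique h2
      simpa [smul_eq_mul] using this
    have hPanal : AnalyticOnNhd ℝ
        (fun z => ∑ n ∈ Finset.range N, (z - m) ^ n * p.coeff n) (Ioo α β) := by
      intro x hx
      apply Finset.analyticAt_fun_sum
      intro n _
      exact ((analyticAt_id.sub analyticAt_const).pow n).mul analyticAt_const
    have hEqIoo : Set.EqOn ρ
        (fun z => ∑ n ∈ Finset.range N, (z - m) ^ n * p.coeff n) (Ioo α β) :=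
      hanal.eqOn_of_preconnected_of_eventuallyEq hPanal isPreconnected_Ioo hmmem hpoly
    apply hnonpoly
    refine ⟨∑ n ∈ Finset.range N, Polynomial.C (p.coeff n) * (Polynomial.X - Polynomial.C m) ^ n,
      fun x hx => ?_⟩
    rw [hEqIoo hx]
    simp [Polynomial.eval_finset_sum, mul_comm]
  -- zero sets are countable
  have hctble : ∀ lam : Fin K → ℚ, lam ≠ 0 →
      Set.Countable {w ∈ Ioo (-δ) δ | F lam w = 0} := by
    intro lam hlam
    set Z : Set ℝ := {w ∈ Ioo (-δ) δ | F lam w = 0} with hZ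
    have hdisc : DiscreteTopology Z := by
      rw [discreteTopology_subtype_iff]
      intro x hx
      rcases (hFanal lam x hx.1).eventually_eq_zero_or_eventually_ne_zero with hzero | hne'
      · exact absurd
          ((hFanal lam).eqOn_of_preconnected_of_eventuallyEq analyticOnNhd_const
            isPreconnected_Ioo hx.1 hzero) (hne lam hlam)
      · rw [inf_principal_eq_bot]
        exact Filter.mem_of_superset hne' (fun y hy hyZ => hy hyZ.2)
    have : Countable Z := TopologicalSpace.separableSpace_iff_countable.mp inferInstance
    exact Set.countable_coe_iff.mpr this
  -- choose w₀ avoiding all zero sets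
  have hnotsub : ¬ (Ioo (-δ) δ ⊆
      ⋃ lam : {l : Fin K → ℚ // l ≠ 0}, {w ∈ Ioo (-δ) δ | F lam.1 w = 0}) := by
    intro hsub
    have hc : Set.Countable (Ioo (-δ:ℝ) δ) :=
      Set.Countable.mono hsub (Set.countable_iUnion fun lam => hctble lam.1 lam.2)
    have hμ := hc.measure_zero MeasureTheory.volume
    rw [Real.volume_Ioo] at hμ
    rw [ENNReal.ofReal_eq_zero] at hμ
    linarith
  obtain ⟨w₀, hw₀, hw₀'⟩ := Set.not_subset.mp hnotsub
  refine ⟨w₀, hw₀, fun lam hsum k => ?_⟩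
  by_contra hk0
  have hlam : lam ≠ 0 := fun h => hk0 (by rw [h]; rfl)
  exact hw₀' (Set.mem_iUnion.mpr ⟨⟨lam, hlam⟩, ⟨hw₀, hsum⟩⟩)
end

section
/- Let K be a positive integer, let ρ : ℝ → ℝ be real analytic on an open interval (α, β) with α < β, let c = (α+β)/2, and let λ_1, …, λ_K be real numbers. Suppose r is a real number with 0 < r ≤ (β−α)/(2K) and that λ_1·ρ(c + 1·w) + λ_2·ρ(c + 2·w) + ⋯ + λ_K·ρ(c + K·w) = 0 for all w ∈ (−r, r). Then for every natural number m with ρ^{(m)}(c) ≠ 0, one has λ_1·1^m + λ_2·2^m + ⋯ + λ_K·K^m = 0. -/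
open Set

open Filter Topology

lemma aux_zero (n : ℕ) : iteratedDeriv n (fun _ : ℝ => (0:ℝ)) = fun _ => 0 := by
  induction n with
  | zero => simp
  | succ n ih => rw [iteratedDeriv_succ, ih]; simp

lemma aux1 {U : Set ℝ} (hU : IsOpen U) {f : ℝ → ℝ} (hf : AnalyticOnNhd ℝ f U)
    (lam s a : ℝ) (n : ℕ) :
    ∀ x, s + a * x ∈ U →
      iteratedDeriv n (fun w => lam * f (s + a * w)) x
        = lam * a ^ n * iteratedDeriv n f (s + a * x) := by
  induction n with
  | zero => intro x hx; simp
  | succ n ih =>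
    intro x hx
    have hVopen : IsOpen ((fun w => s + a * w) ⁻¹' U) :=
      hU.preimage (by continuity)
    have hev : iteratedDeriv n (fun w => lam * f (s + a * w))
        =ᶠ[𝓝 x] fun w => lam * a ^ n * iteratedDeriv n f (s + a * w) := by
      filter_upwards [hVopen.mem_nhds hx] with w hw using ih w hw
    have hd : DifferentiableAt ℝ (deriv^[n] f) (s + a * x) :=
      ((hf.iterated_deriv n) _ hx).differentiableAt
    have h1 : HasDerivAt (fun w : ℝ => s + a * w) a x := by
      simpa using ((hasDerivAt_id x).const_mul a).const_add s
    have hcomp : HasDerivAt (fun w => deriv^[n] f (s + a * w))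
        (deriv (deriv^[n] f) (s + a * x) * a) x :=
      hd.hasDerivAt.comp x h1
    have h2 := (hcomp.const_mul (lam * a ^ n)).deriv
    rw [iteratedDeriv_succ, hev.deriv_eq]
    simp only [iteratedDeriv_eq_iterate] at h2 ⊢
    rw [h2, Function.iterate_succ_apply']
    ring

lemma aux2 {U : Set ℝ} (hU : IsOpen U) {ι : Type*} [Fintype ι] {f : ι → ℝ → ℝ}
    (hf : ∀ i, AnalyticOnNhd ℝ (f i) U) (n : ℕ) :
    ∀ x ∈ U, iteratedDeriv n (fun w => ∑ i, f i w) x = ∑ i, iteratedDeriv n (f i) x := by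
  induction n with
  | zero => intro x hx; simp
  | succ n ih =>
    intro x hx
    have hev : iteratedDeriv n (fun w => ∑ i, f i w)
        =ᶠ[𝓝 x] fun w => ∑ i, iteratedDeriv n (f i) w := by
      filter_upwards [hU.mem_nhds hx] with w hw using ih w hw
    have hd : ∀ i ∈ Finset.univ, DifferentiableAt ℝ (iteratedDeriv n (f i)) x := by
      intro i _
      rw [iteratedDeriv_eq_iterate]
      exact ((hf i).iterated_deriv n _ hx).differentiableAt
    rw [iteratedDeriv_succ, hev.deriv_eq, deriv_fun_sum hd]
    simp [iteratedDeriv_succ]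

/-- **Taylor-coefficient identities from a vanishing analytic combination.**
If `ρ` is real analytic on `(α, β)`, `c = (α+β)/2`, `0 < r ≤ (β-α)/(2K)`, and
`∑_{k=1}^K λ_k ρ(c + k·w) = 0` for all `w ∈ (-r, r)`, then for every `m` with
`ρ^{(m)}(c) ≠ 0` one has `∑_{k=1}^K λ_k k^m = 0`. -/
theorem power_sum_zero_of_vanishing_combination
    (K : ℕ) (hK : 0 < K) (ρ : ℝ → ℝ) (α β : ℝ) (hαβ : α < β)
    (hanal : AnalyticOnNhd ℝ ρ (Ioo α β))
    (lam : Fin K → ℝ) (r : ℝ) (hr : 0 < r) (hrK : r ≤ (β - α) / (2 * K))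
    (hvanish : ∀ w ∈ Ioo (-r) r,
      (∑ k : Fin K, lam k * ρ ((α + β) / 2 + ((k : ℕ) + 1) * w)) = 0) :
    ∀ m : ℕ, iteratedDeriv m ρ ((α + β) / 2) ≠ 0 →
      (∑ k : Fin K, lam k * (((k : ℕ) : ℝ) + 1) ^ m) = 0 := by
  intro m hm
  set c : ℝ := (α + β) / 2 with hc
  -- membership of the shifted points
  have hmem : ∀ (k : Fin K), ∀ w ∈ Ioo (-r) r, c + (((k : ℕ) : ℝ) + 1) * w ∈ Ioo α β := by
    intro k w hw
    have hwlt : |w| < r := abs_lt.2 ⟨hw.1, hw.2⟩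
    have hkK : ((k : ℕ) : ℝ) + 1 ≤ (K : ℝ) := by
      exact_mod_cast Nat.succ_le_of_lt k.2
    have hK' : (0:ℝ) < K := by exact_mod_cast hK
    have hKr : (K : ℝ) * r ≤ (β - α) / 2 := by
      have h3 := (le_div_iff₀ (by positivity : (0:ℝ) < 2 * K)).1 hrK
      nlinarith
    have habs : |(((k : ℕ) : ℝ) + 1) * w| < (β - α) / 2 := by
      rw [abs_mul, abs_of_pos (by positivity : (0:ℝ) < ((k : ℕ) : ℝ) + 1)]
      have h1 : (((k : ℕ) : ℝ) + 1) * |w| ≤ (K : ℝ) * |w| := by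
        apply mul_le_mul_of_nonneg_right hkK (abs_nonneg w)
      have h2 : (K : ℝ) * |w| < (K : ℝ) * r := by
        exact mul_lt_mul_of_pos_left hwlt hK'
      linarith
    rw [abs_lt] at habs
    constructor <;> [skip; skip] <;> simp only [hc] <;> linarith [habs.1, habs.2]
  have hUopen : IsOpen (Ioo (-r) r) := isOpen_Ioo
  -- each summand is analytic on Ioo (-r) r
  have hfk : ∀ k : Fin K,
      AnalyticOnNhd ℝ (fun w => lam k * ρ (c + (((k : ℕ) : ℝ) + 1) * w)) (Ioo (-r) r) := by
    intro k w hw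
    have hinner : AnalyticAt ℝ (fun w : ℝ => c + (((k : ℕ) : ℝ) + 1) * w) w :=
      analyticAt_const.add (analyticAt_const.mul analyticAt_id)
    have hco : AnalyticAt ℝ (ρ ∘ fun w : ℝ => c + (((k : ℕ) : ℝ) + 1) * w) w :=
      AnalyticAt.comp (f := fun w : ℝ => c + (((k : ℕ) : ℝ) + 1) * w) (x := w) (hanal _ (hmem k w hw)) hinner
    exact analyticAt_const.mul hco
  have h0 : (0:ℝ) ∈ Ioo (-r) r := ⟨by linarith, hr⟩
  -- iterated derivative of the sum at 0 is 0
  have hFzero : iteratedDeriv m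
      (fun w => ∑ k : Fin K, lam k * ρ (c + (((k : ℕ) : ℝ) + 1) * w)) 0 = 0 := by
    have hev : (fun w => ∑ k : Fin K, lam k * ρ (c + (((k : ℕ) : ℝ) + 1) * w))
        =ᶠ[𝓝 (0:ℝ)] fun _ => (0:ℝ) := by
      filter_upwards [hUopen.mem_nhds h0] with w hw using hvanish w hw
    rw [hev.iteratedDeriv_eq, aux_zero]
  -- expand via aux2 and aux1
  rw [aux2 hUopen hfk m 0 h0] at hFzero
  have heach : ∀ k : Fin K,
      iteratedDeriv m (fun w => lam k * ρ (c + (((k : ℕ) : ℝ) + 1) * w)) 0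
        = lam k * (((k : ℕ) : ℝ) + 1) ^ m * iteratedDeriv m ρ c := by
    intro k
    have := aux1 isOpen_Ioo hanal (lam k) c (((k : ℕ) : ℝ) + 1) m 0
      (by simpa using hmem k 0 h0)
    simpa using this
  rw [Finset.sum_congr rfl (fun k _ => heach k)] at hFzero
  have : (∑ k : Fin K, lam k * (((k : ℕ) : ℝ) + 1) ^ m) * iteratedDeriv m ρ c = 0 := by
    rw [Finset.sum_mul]
    exact hFzero
  rcases mul_eq_zero.1 this with h | h
  · exact h
  · exact absurd h hm
end

section
/- For every x ≥ 0, it holds that ψ̃(x + 1/2) + ψ̃(x + 1) + ψ̃(x + 3/2) + ψ̃(x + 2) = 1. -/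
open Set

/-- The 2-periodic triangle wave `g(x) = |x - 2⌊(x+1)/2⌋|`. -/
noncomputable def triWave (x : ℝ) : ℝ := |x - 2 * (⌊(x + 1) / 2⌋ : ℤ)|

/-- `ψ̃(x) = g(x + 1 - g(x + 1))`. -/
noncomputable def psiTilde (x : ℝ) : ℝ := triWave (x + 1 - triWave (x + 1))

lemma triWave_add_two_int (n : ℤ) (y : ℝ) : triWave (y + 2 * n) = triWave y := by
  unfold triWave
  have h : (y + 2 * n + 1) / 2 = (y + 1) / 2 + n := by ring
  rw [h, Int.floor_add_intCast]
  congr 1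
  push_cast
  ring

lemma triWave_abs (y : ℝ) (h1 : -1 ≤ y) (h2 : y ≤ 1) : triWave y = |y| := by
  rcases lt_or_eq_of_le h2 with h | h
  · have hf : ⌊(y + 1) / 2⌋ = 0 := by
      rw [Int.floor_eq_zero_iff, mem_Ico]
      constructor <;> linarith
    simp [triWave, hf]
  · subst h; norm_num [triWave]

lemma triWave_abs' (y : ℝ) (h1 : 1 ≤ y) (h2 : y ≤ 3) : triWave y = |y - 2| := by
  have := triWave_add_two_int 1 (y - 2)
  have h3 : y - 2 + 2 * (1 : ℤ) = y := by push_cast; ring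
  rw [h3] at this
  rw [this]
  exact triWave_abs _ (by linarith) (by linarith)

lemma psiTilde_add_two_int (n : ℤ) (y : ℝ) : psiTilde (y + 2 * n) = psiTilde y := by
  unfold psiTilde
  have h : y + 2 * n + 1 = (y + 1) + 2 * n := by ring
  rw [h, triWave_add_two_int]
  have h2 : y + 1 + 2 * n - triWave (y + 1) = (y + 1 - triWave (y + 1)) + 2 * n := by ring
  rw [h2, triWave_add_two_int]

lemma psiTilde_low (t : ℝ) (h1 : 0 ≤ t) (h2 : t ≤ 1/2) : psiTilde t = 2 * t := by
  unfold psiTilde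
  rw [triWave_abs' (t + 1) (by linarith) (by linarith)]
  have : |t + 1 - 2| = 1 - t := by rw [abs_of_nonpos (by linarith)]; ring
  rw [this]
  have h3 : t + 1 - (1 - t) = 2 * t := by ring
  rw [h3, triWave_abs _ (by linarith) (by linarith), abs_of_nonneg (by linarith)]

lemma psiTilde_mid (t : ℝ) (h1 : 1/2 ≤ t) (h2 : t ≤ 1) : psiTilde t = 2 - 2 * t := by
  unfold psiTilde
  rw [triWave_abs' (t + 1) (by linarith) (by linarith)]
  have : |t + 1 - 2| = 1 - t := by rw [abs_of_nonpos (by linarith)]; ring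
  rw [this]
  have h3 : t + 1 - (1 - t) = 2 * t := by ring
  rw [h3, triWave_abs' _ (by linarith) (by linarith), abs_of_nonpos (by linarith)]
  ring

lemma psiTilde_high (t : ℝ) (h1 : 1 ≤ t) (h2 : t ≤ 2) : psiTilde t = 0 := by
  unfold psiTilde
  rw [triWave_abs' (t + 1) (by linarith) (by linarith)]
  have : |t + 1 - 2| = t - 1 := by rw [abs_of_nonneg (by linarith : (0:ℝ) ≤ t + 1 - 2)]; ring
  rw [this]
  have h3 : t + 1 - (t - 1) = 0 + 2 * (1 : ℤ) := by push_cast; ring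
  rw [h3, triWave_add_two_int]
  simp [triWave_abs 0 (by norm_num) (by norm_num)]

/-- **Partition of unity property of `ψ̃`:** for every `x ≥ 0`,
`ψ̃(x + 1/2) + ψ̃(x + 1) + ψ̃(x + 3/2) + ψ̃(x + 2) = 1`. -/
theorem psiTilde_partition_of_unity :
    ∀ x : ℝ, 0 ≤ x →
      psiTilde (x + 1 / 2) + psiTilde (x + 1) + psiTilde (x + 3 / 2) + psiTilde (x + 2) = 1 := by
  intro x _
  set n : ℤ := ⌊x / 2⌋ with hn
  set t : ℝ := x - 2 * n with ht
  have ht0 : 0 ≤ t := by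
    have := Int.floor_le (x / 2)
    simp only [ht, hn]; linarith
  have ht2 : t < 2 := by
    have := Int.lt_floor_add_one (x / 2)
    simp only [ht, hn]; linarith
  have hx : ∀ c : ℝ, x + c = (t + c) + 2 * n := by intro c; simp [ht]; ring
  rw [hx (1/2), hx 1, hx (3/2), hx 2,
    psiTilde_add_two_int, psiTilde_add_two_int, psiTilde_add_two_int, psiTilde_add_two_int]
  have hper : ∀ y : ℝ, psiTilde (y + 2) = psiTilde y := by
    intro y
    have := psiTilde_add_two_int 1 y
    norm_num at this
    exact this
  rcases le_or_gt t (1/2) with h | h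
  · rw [psiTilde_mid (t + 1/2) (by linarith) (by linarith),
      psiTilde_high (t + 1) (by linarith) (by linarith),
      psiTilde_high (t + 3/2) (by linarith) (by linarith),
      show t + 2 = t + 2 by rfl, hper, psiTilde_low t ht0 h]
    ring
  rcases le_or_gt t 1 with h1 | h1
  · rw [psiTilde_high (t + 1/2) (by linarith) (by linarith),
      psiTilde_high (t + 1) (by linarith) (by linarith),
      show t + 3/2 = (t - 1/2) + 2 by ring, hper,
      psiTilde_low (t - 1/2) (by linarith) (by linarith),
      hper, psiTilde_mid t (by linarith) h1]
    ring
  rcases le_or_gt t (3/2) with h2 | h2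
  · rw [psiTilde_high (t + 1/2) (by linarith) (by linarith),
      show t + 1 = (t - 1) + 2 by ring, hper,
      psiTilde_low (t - 1) (by linarith) (by linarith),
      show t + 3/2 = (t - 1/2) + 2 by ring, hper,
      psiTilde_mid (t - 1/2) (by linarith) (by linarith),
      hper, psiTilde_high t (by linarith) (by linarith)]
    ring
  · rw [show t + 1/2 = (t - 3/2) + 2 by ring, hper,
      psiTilde_low (t - 3/2) (by linarith) (by linarith),
      show t + 1 = (t - 1) + 2 by ring, hper,
      psiTilde_mid (t - 1) (by linarith) (by linarith),
      show t + 3/2 = (t - 1/2) + 2 by ring, hper,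
      psiTilde_high (t - 1/2) (by linarith) (by linarith),
      hper, psiTilde_high t (by linarith) (by linarith)]
    ring
end
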